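/- Let $m \ge 1$ and $K \ge 1$ be integers, and set $n = 2^{m+1}K + 2^m - 1$ (so $n$ is odd and $n \ne 2^m - 1$). Then $R_n(2^m) = n - 2^m + \binom{n-1}{2^m}$ is odd. -/

import Mathlib

/-!
Here `n - 1 = 2^m · 2K + (2^m - 2)` has binary digit `0` in position `m`, so by Lucas's theorem
`(n - 1).choose (2^m)` is even. As `n` is odd and `2^m` is even, `R n (2^m)` is odd.
-/

/-- `R n ε = n - ε + (-1)^ε * (n-1).choose ε`, as an integer. -/
def R (n ε : ℕ) : ℤ := (n : ℤ) - (ε : ℤ) + (-1) ^ ε * ((n - 1).choose ε : ℤ)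

/-- In base `p`, `p ^ m` has the single digit `1` in position `m`, so Lucas's theorem reads off
the `m`-th digit of `n`. -/
theorem Nat.choose_prime_pow_modEq_div {p : ℕ} [hp : Fact p.Prime] (n m : ℕ) :
    n.choose (p ^ m) ≡ (n / p ^ m : ℕ) [ZMOD p] := by
  have hdigit : ∀ i ∈ Finset.range m, (n / p ^ i % p).choose (p ^ m / p ^ i % p) = 1 := by
    intro i hi
    obtain ⟨j, rfl⟩ := Nat.exists_eq_add_of_lt (Finset.mem_range.1 hi)
    rw [Nat.pow_div (by omega) hp.out.pos, show i + j + 1 - i = j + 1 by omega, pow_succ,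
      Nat.mul_mod_left, Nat.choose_zero_right]
  simpa [Nat.div_self (pow_pos hp.out.pos m), Finset.prod_eq_one hdigit] using
    Choose.choose_modEq_choose_mul_prod_range_choose (n := n) (k := p ^ m) (p := p) m

theorem Nat.even_choose_two_pow_iff (n m : ℕ) :
    Even (n.choose (2 ^ m)) ↔ Even (n / 2 ^ m) := by
  have hmod : n.choose (2 ^ m) % 2 = n / 2 ^ m % 2 :=
    Int.natCast_modEq_iff.1 (Nat.choose_prime_pow_modEq_div n m)
  rw [Nat.even_iff, Nat.even_iff, hmod]

theorem R_of_even {ε : ℕ} (hε : Even ε) (n : ℕ) :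
    R n ε = n - ε + (n - 1).choose ε := by
  rw [R, hε.neg_one_pow, one_mul]

theorem stmt_6_general (m K : ℕ) (hm : 1 ≤ m) :
    Odd (R (2 ^ (m + 1) * K + 2 ^ m - 1) (2 ^ m)) := by
  have h2m : Even (2 ^ m) := Nat.even_pow.2 ⟨even_two, by omega⟩
  have h2 : 2 ≤ 2 ^ m := Nat.le_self_pow (by omega) 2
  have hn : 2 ^ (m + 1) * K + 2 ^ m - 1 = 2 ^ m * (2 * K) + (2 ^ m - 2) + 1 := by
    rw [pow_succ, mul_assoc]; omega
  rw [hn, R_of_even h2m, Nat.add_sub_cancel]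
  set N := 2 ^ m * (2 * K) + (2 ^ m - 2)
  have hN : Even N :=
    ((even_two_mul K).mul_left _).add ((Nat.even_sub h2).2 (iff_of_true h2m even_two))
  have hdiv : N / 2 ^ m = 2 * K := by
    rw [Nat.mul_add_div (by positivity), Nat.div_eq_of_lt (by omega), add_zero]
  have hchoose : Even (N.choose (2 ^ m)) := by
    rw [Nat.even_choose_two_pow_iff, hdiv]
    exact even_two_mul K
  push_cast
  exact ((Int.even_coe_nat N |>.2 hN).add_one.sub_even (by exact_mod_cast h2m)).add_even
    (by exact_mod_cast hchoose)

theorem stmt_6 (m K : ℕ) (hm : 1 ≤ m) (hK : 1 ≤ K) :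
    Odd (R (2 ^ (m + 1) * K + 2 ^ m - 1) (2 ^ m)) :=
  stmt_6_general m K hm
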